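/- Let P^W = {λ ∈ P : wλ = λ for all w ∈ W}. Then the ring of W-invariants ℤ[P]^W equals the ℤ-span of {e^λ : λ ∈ P^W}; that is, every element u ∈ ℤ[P] with w·u = u for all w ∈ W is a ℤ-linear combination of elements e^λ with λ ∈ P^W. -/

import Mathlib

open scoped BigOperators

namespace AffineKM

/-- An indecomposable generalized Cartan matrix of affine type, together with a
choice of positive integers `(a_i)` and `(a_i^∨)` annihilating it on the right
and on the left. -/
structure AffineData (I : Type) [Fintype I] [DecidableEq I] where
  a : I → I → ℤ
  apos : I → ℤ
  avee : I → ℤ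
  diag : ∀ i, a i i = 2
  offdiag_nonpos : ∀ i j, i ≠ j → a i j ≤ 0
  zero_iff : ∀ i j, a i j = 0 ↔ a j i = 0
  connected : ∀ s : Set I, s.Nonempty → sᶜ.Nonempty → ∃ i ∈ s, ∃ j ∈ sᶜ, a i j ≠ 0
  apos_pos : ∀ i, 0 < apos i
  avee_pos : ∀ i, 0 < avee i
  row_zero : ∀ i, (∑ j, a i j * apos j) = 0
  col_zero : ∀ j, (∑ i, avee i * a i j) = 0

/-- The group structure on `AddAut A` given by composition, as in the older Mathlib
(where `AddAut A` was a multiplicative group; it is now an additive group). -/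
instance instGroupAddAutComp (A : Type) [Add A] : Group (AddAut A) where
  mul g h := AddEquiv.trans h g
  one := AddEquiv.refl _
  inv := AddEquiv.symm
  mul_assoc _ _ _ := rfl
  one_mul _ := rfl
  mul_one _ := rfl
  inv_mul_cancel := AddEquiv.self_trans_symm

variable {I : Type} [Fintype I] [DecidableEq I]

/-- The weight lattice `P`, free on the `Λ_i` and the `α_i`: the first component
records the coordinates with respect to the basis `{Λ_i}`, the second component the
coordinates with respect to the basis `{α_i}`. -/
abbrev P (I : Type) := (I → ℤ) × (I → ℤ)

/-- The fundamental weight `Λ_i`. -/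
def Lambda (i : I) : P I := (Pi.single i 1, 0)

/-- The simple root `α_i`. -/
def alphaRt (i : I) : P I := (0, Pi.single i 1)

/-- A weight lies in `Q = ⊕ ℤα_i` iff its `Λ`-coordinates vanish. -/
def inQ (lam : P I) : Prop := lam.1 = 0

namespace AffineData

variable (D : AffineData I)

/-- The pairing `⟨h_i, λ⟩` with the simple coroot `h_i`. -/
def coroot (i : I) (lam : P I) : ℤ := lam.1 i + ∑ j, D.a i j * lam.2 j

lemma coroot_add (i : I) (x y : P I) :
    D.coroot i (x + y) = D.coroot i x + D.coroot i y := by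
  simp only [coroot, Prod.fst_add, Prod.snd_add, Pi.add_apply, mul_add,
    Finset.sum_add_distrib]
  ring

lemma coroot_zsmul (i : I) (z : ℤ) (x : P I) :
    D.coroot i (z • x) = z * D.coroot i x := by
  simp only [coroot, Prod.smul_fst, Prod.smul_snd, Pi.smul_apply, smul_eq_mul,
    mul_add, Finset.mul_sum]
  congr 1
  apply Finset.sum_congr rfl
  intro j _
  ring

lemma coroot_alpha_self (i : I) : D.coroot i (alphaRt i) = 2 := by
  simp only [coroot, alphaRt, Pi.zero_apply, zero_add]
  rw [Finset.sum_eq_single i]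
  · simp [D.diag]
  · intro j _ hj
    simp [Pi.single_apply, Ne.symm hj]
  · intro h; exact absurd (Finset.mem_univ i) h

lemma refl_aux (i : I) (lam : P I) :
    (lam - D.coroot i lam • alphaRt i)
      - D.coroot i (lam - D.coroot i lam • alphaRt i) • alphaRt i = lam := by
  have h1 : D.coroot i (lam - D.coroot i lam • alphaRt i)
      = - D.coroot i lam := by
    have h0 := D.coroot_add i (lam - D.coroot i lam • alphaRt i)
      (D.coroot i lam • alphaRt i)
    simp only [sub_add_cancel] at h0
    have h2 : D.coroot i (D.coroot i lam • alphaRt i) = 2 * D.coroot i lam := by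
      rw [D.coroot_zsmul, D.coroot_alpha_self]; ring
    omega
  rw [h1, neg_zsmul]
  abel

/-- The simple reflection `s_i : λ ↦ λ - ⟨h_i,λ⟩ α_i`, as an automorphism of `P`. -/
def refl (i : I) : AddAut (P I) where
  toFun lam := lam - D.coroot i lam • alphaRt i
  invFun lam := lam - D.coroot i lam • alphaRt i
  left_inv lam := D.refl_aux i lam
  right_inv lam := D.refl_aux i lam
  map_add' x y := by
    rw [D.coroot_add, add_zsmul]
    abel

/-- The affine Weyl group, as a subgroup of the automorphism group of `P`. -/
def weyl : Subgroup (AddAut (P I)) := Subgroup.closure (Set.range D.refl)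

/-- The simple reflection `s_i` as an element of the Weyl group. -/
def sgen (i : I) : D.weyl := ⟨D.refl i, Subgroup.subset_closure ⟨i, rfl⟩⟩

/-- The length of an element of the Weyl group: the minimal length of an
expression as a product of simple reflections. -/
noncomputable def len (w : D.weyl) : ℕ :=
  sInf {n | ∃ l : List I, l.length = n ∧ (w : AddAut (P I)) = (l.map D.refl).prod}

/-- The null root `δ = Σ a_i α_i`. -/
def delta : P I := (0, D.apos)

/-- The pairing `⟨c, λ⟩` with the canonical central element `c = Σ a_i^∨ h_i`. -/
def cpair (lam : P I) : ℤ := ∑ i, D.avee i * D.coroot i lam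

/-- The dual Coxeter number `κ* = ⟨c, ρ⟩ = Σ a_i^∨`. -/
def kstar : ℤ := ∑ i, D.avee i

/-- λ ∈ P is regular if `⟨c,λ⟩ ≠ 0` and `⟨h_i, wλ⟩ ≠ 0` for all `w ∈ W`, `i ∈ I`. -/
def IsRegularWt (lam : P I) : Prop :=
  D.cpair lam ≠ 0 ∧ ∀ w ∈ D.weyl, ∀ i : I, D.coroot i (w lam) ≠ 0

/-- The `W`-orbit of a weight. -/
def orb (lam : P I) : Set (P I) := {mu | ∃ w ∈ D.weyl, w lam = mu}

end AffineData

/-- The group algebra `ℤ[P]`. -/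
abbrev ZP (I : Type) [Fintype I] [DecidableEq I] := AddMonoidAlgebra ℤ (P I)

/-- The basis element `e^λ` of `ℤ[P]`. -/
noncomputable def expw (lam : P I) : ZP I := AddMonoidAlgebra.single lam 1

/-- The action of an automorphism `w` of `P` on the group algebra `ℤ[P]`,
`e^λ ↦ e^{wλ}`, as a ring homomorphism. -/
noncomputable def wact (w : AddAut (P I)) : ZP I →+* ZP I :=
  AddMonoidAlgebra.mapDomainRingHom ℤ w.toAddMonoidHom

lemma wact_single (w : AddAut (P I)) (lam : P I) (c : ℤ) :
    wact w (AddMonoidAlgebra.single lam c) = AddMonoidAlgebra.single (w lam) c := by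
  simp [wact, AddMonoidAlgebra.mapDomainRingHom, Finsupp.mapDomain_single]


namespace AffineData

variable (D : AffineData I)

lemma coroot_delta (i : I) : D.coroot i D.delta = 0 := by
  simp only [coroot, delta, Pi.zero_apply, zero_add]
  exact D.row_zero i

lemma refl_apply (i : I) (lam : P I) :
    D.refl i lam = lam - D.coroot i lam • alphaRt i := rfl

lemma refl_delta (i : I) : D.refl i D.delta = D.delta := by
  rw [refl_apply, D.coroot_delta, zero_zsmul, sub_zero]

lemma weyl_fix_delta {w : AddAut (P I)} (hw : w ∈ D.weyl) : w D.delta = D.delta := by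
  induction hw using Subgroup.closure_induction with
  | mem x hx => obtain ⟨i, rfl⟩ := hx; exact D.refl_delta i
  | one => rfl
  | mul x y hx hy ihx ihy =>
      show x (y D.delta) = D.delta
      rw [ihy, ihx]
  | inv x hx ih =>
      have : x⁻¹ (x D.delta) = x⁻¹ D.delta := by rw [ih]
      exact this.symm.trans (x.symm_apply_apply _)

lemma weyl_fix_zsmul_delta {w : AddAut (P I)} (hw : w ∈ D.weyl) (n : ℤ) :
    w (n • D.delta) = n • D.delta := by
  rw [map_zsmul, D.weyl_fix_delta hw]

/-- The multiplicative set generated by the elements `e^{nδ} - 1`, `n ≥ 1`; `R ⊗_{ℤ[q,q⁻¹]} ℤ[P]`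
is realized as the localization of `ℤ[P]` at this set. -/
noncomputable def denomSet : Submonoid (ZP I) :=
  Submonoid.closure {x | ∃ n : ℤ, 0 < n ∧ x = expw (n • D.delta) - 1}

/-- `R ⊗_{ℤ[q,q⁻¹]} ℤ[P]`, realized as the localization of `ℤ[P]` at the
multiplicative set generated by the `e^{nδ} - 1`, `n ≥ 1` (note that `q = e^δ` is
already invertible in this ring). -/
noncomputable abbrev locZP := Localization D.denomSet

lemma wact_denom {w : AddAut (P I)} (hw : w ∈ D.weyl) :
    D.denomSet ≤ Submonoid.comap (wact w) D.denomSet := by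
  rw [denomSet, Submonoid.closure_le]
  intro x hx
  obtain ⟨n, hn, rfl⟩ := hx
  simp only [Submonoid.coe_comap, Set.mem_preimage, SetLike.mem_coe]
  have : wact w (expw (n • D.delta) - 1) = expw (n • D.delta) - 1 := by
    rw [map_sub, map_one, expw, wact_single, D.weyl_fix_zsmul_delta hw]
  rw [this]
  exact Submonoid.subset_closure ⟨n, hn, rfl⟩

/-- The action of `w ∈ W` on `R ⊗_{ℤ[q,q⁻¹]} ℤ[P]`. -/
noncomputable def wactM (w : D.weyl) : D.locZP →+* D.locZP :=
  IsLocalization.map (Localization D.denomSet) (wact (w : AddAut (P I)))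
    (D.wact_denom w.2)

end AffineData

/-- The projection `P = L ⊕ Q → Q`, as an additive homomorphism. -/
def projQ : P I →+ P I where
  toFun lam := (0, lam.2)
  map_zero' := rfl
  map_add' x y := by simp [Prod.ext_iff]

/-- The ring homomorphism `j_e : ℤ[P] → ℤ[Q] ⊆ ℤ[P]`, `e^{λ+α} ↦ e^α` for
`λ ∈ L`, `α ∈ Q`. -/
noncomputable def jeRing : ZP I →+* ZP I :=
  AddMonoidAlgebra.mapDomainRingHom ℤ (projQ (I := I))

/-- The ℤ-linear map `j_w : ℤ[P] → ℤ[Q] ⊆ ℤ[P]`, `e^{λ+α} ↦ e^{w(λ+α)-λ}` for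
`λ ∈ L`, `α ∈ Q`. -/
noncomputable def jmap (w : AddAut (P I)) (u : ZP I) : ZP I :=
  AddMonoidAlgebra.ofCoeff (Finsupp.mapDomain (fun mu => w mu - (mu.1, 0)) u.coeff)

namespace AffineData

variable (D : AffineData I)

lemma je_denom : D.denomSet ≤ Submonoid.comap (jeRing (I := I)) D.denomSet := by
  rw [denomSet, Submonoid.closure_le]
  intro x hx
  obtain ⟨n, hn, rfl⟩ := hx
  simp only [Submonoid.coe_comap, Set.mem_preimage, SetLike.mem_coe]
  have h1 : jeRing (expw (n • D.delta) - 1) = expw (n • D.delta) - 1 := by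
    rw [map_sub, map_one, expw, jeRing]
    have : AddMonoidAlgebra.mapDomainRingHom ℤ (projQ (I := I))
        (AddMonoidAlgebra.single (n • D.delta) 1)
        = AddMonoidAlgebra.single (projQ (n • D.delta)) (1 : ℤ) := by
      simp [AddMonoidAlgebra.mapDomainRingHom, Finsupp.mapDomain_single]
    rw [this]
    have h2 : projQ (n • D.delta) = n • D.delta := by
      show ((0 : I → ℤ), (n • D.delta).2) = n • D.delta
      simp [delta, Prod.ext_iff]
    rw [h2]
  rw [h1]
  exact Submonoid.subset_closure ⟨n, hn, rfl⟩

/-- The `R`-linear extension of `j_e` to `R ⊗_{ℤ[q,q⁻¹]} ℤ[P]`, with values in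
`R ⊗_{ℤ[q,q⁻¹]} ℤ[Q] ⊆ R ⊗_{ℤ[q,q⁻¹]} ℤ[P]`. -/
noncomputable def jeLoc : D.locZP →+* D.locZP :=
  IsLocalization.map (Localization D.denomSet) (jeRing (I := I)) D.je_denom

end AffineData


namespace AffineData

variable (D : AffineData I)

lemma coroot_sub (i : I) (x y : P I) :
    D.coroot i (x - y) = D.coroot i x - D.coroot i y := by
  have := D.coroot_add i (x - y) y
  rw [sub_add_cancel] at this
  omega

lemma coroot_alpha (i j : I) : D.coroot j (alphaRt i) = D.a j i := by
  simp only [coroot, alphaRt, Pi.zero_apply, zero_add]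
  rw [Finset.sum_eq_single i]
  · simp
  · intro k _ hk; simp [Pi.single_apply, Ne.symm hk]
  · intro hh; exact absurd (Finset.mem_univ i) hh

lemma cpair_alpha (i : I) : D.cpair (alphaRt i) = 0 := by
  simp only [cpair, coroot_alpha]
  exact D.col_zero i

lemma cpair_refl (i : I) (lam : P I) : D.cpair (D.refl i lam) = D.cpair lam := by
  simp only [cpair, refl_apply]
  rw [← sub_eq_zero, ← Finset.sum_sub_distrib]
  have : ∀ j : I, D.avee j * D.coroot j (lam - D.coroot i lam • alphaRt i)
      - D.avee j * D.coroot j lam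
      = -(D.coroot i lam) * (D.avee j * D.coroot j (alphaRt i)) := by
    intro j
    rw [D.coroot_sub, D.coroot_zsmul]
    ring
  calc (∑ j, (D.avee j * D.coroot j (lam - D.coroot i lam • alphaRt i)
        - D.avee j * D.coroot j lam))
      = ∑ j, -(D.coroot i lam) * (D.avee j * D.coroot j (alphaRt i)) :=
        Finset.sum_congr rfl (fun j _ => this j)
    _ = -(D.coroot i lam) * D.cpair (alphaRt i) := by
        rw [cpair, Finset.mul_sum]
    _ = 0 := by rw [D.cpair_alpha]; ring


lemma cpair_weyl {w : AddAut (P I)} (hw : w ∈ D.weyl) (lam : P I) :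
    D.cpair (w lam) = D.cpair lam := by
  induction hw using Subgroup.closure_induction generalizing lam with
  | mem x hx => obtain ⟨i, rfl⟩ := hx; exact D.cpair_refl i lam
  | one => rfl
  | mul x y hx hy ihx ihy =>
      show D.cpair (x (y lam)) = _
      rw [ihx, ihy]
  | inv x hx ih =>
      have := ih (x⁻¹ lam)
      rw [show x (x⁻¹ lam) = lam from x.apply_symm_apply lam] at this
      exact this.symm

end AffineData

/-- The auxiliary height functional: sum of the `α`-coordinates. -/
def hfun (lam : P I) : ℤ := ∑ i, lam.2 i

namespace AffineData

variable (D : AffineData I)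

lemma hfun_refl (i : I) (lam : P I) :
    hfun (D.refl i lam) = hfun lam - D.coroot i lam := by
  simp only [hfun, refl_apply, Prod.snd_sub, Prod.smul_snd, alphaRt,
    Pi.sub_apply, Pi.smul_apply, smul_eq_mul]
  rw [Finset.sum_sub_distrib]
  congr 1
  rw [Finset.sum_eq_single i]
  · simp
  · intro k _ hk; simp [Pi.single_apply, Ne.symm hk]
  · intro hh; exact absurd (Finset.mem_univ i) hh

lemma weyl_fix_of_coroot_zero {lam : P I} (hc : ∀ i : I, D.coroot i lam = 0) :
    ∀ w ∈ D.weyl, w lam = lam := by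
  intro w hw
  induction hw using Subgroup.closure_induction with
  | mem x hx =>
      obtain ⟨i, rfl⟩ := hx
      rw [refl_apply, hc i, zero_zsmul, sub_zero]
  | one => rfl
  | mul x y hx hy ihx ihy =>
      show x (y lam) = lam
      rw [ihy, ihx]
  | inv x hx ih =>
      have : x⁻¹ (x lam) = x⁻¹ lam := by rw [ih]
      exact this.symm.trans (x.symm_apply_apply _)

end AffineData

/-- `ℤ[P]^W = ℤ[P^W]`: every `W`-invariant element of `ℤ[P]` is a ℤ-linear combination of
the `e^λ` with `λ ∈ P^W`, i.e. it is supported on `W`-fixed weights. -/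
theorem invariants_supported_on_fixed_weights (D : AffineData I) (u : ZP I)
    (h : ∀ w ∈ D.weyl, wact w u = u) :
    ∀ mu : P I, u.coeff mu ≠ 0 → ∀ w ∈ D.weyl, w mu = mu := by
  classical
  intro mu hmu
  -- the value of u is constant along the W-action
  have hval : ∀ w ∈ D.weyl, ∀ x : P I, u.coeff (w x) = u.coeff x := by
    intro w hw x
    have h1 : wact w u = u := h w hw
    have h2 : (wact w u).coeff (w x) = u.coeff x := by
      show (Finsupp.mapDomain w u.coeff) (w x) = u.coeff x
      exact Finsupp.mapDomain_apply w.injective u.coeff x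
    rw [h1] at h2
    exact h2
  -- the orbit of mu, as a subset of the (finite) support of u
  set Orb : P I → Prop := fun nu => ∃ w ∈ D.weyl, w mu = nu with hOrb
  set T : Finset (P I) := u.coeff.support.filter Orb with hT
  have hmemT : ∀ nu : P I, Orb nu → nu ∈ T := by
    rintro nu ⟨w, hw, hwmu⟩
    rw [hT, Finset.mem_filter, Finsupp.mem_support_iff]
    refine ⟨?_, ⟨w, hw, hwmu⟩⟩
    rw [← hwmu, hval w hw]
    exact hmu
  have hTne : T.Nonempty := ⟨mu, hmemT mu ⟨1, one_mem _, rfl⟩⟩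
  have hOrbRefl : ∀ (i : I) (nu : P I), Orb nu → Orb (D.refl i nu) := by
    rintro i nu ⟨w, hw, hwmu⟩
    refine ⟨D.refl i * w, mul_mem (Subgroup.subset_closure ⟨i, rfl⟩) hw, ?_⟩
    show (D.refl i) (w mu) = _
    rw [hwmu]
  -- a maximizer of hfun on T is dominant
  obtain ⟨nu, hnuT, hnumax⟩ := T.exists_max_image hfun hTne
  obtain ⟨nu', hnuT', hnumin⟩ := T.exists_min_image hfun hTne
  have hnuOrb : Orb nu := (Finset.mem_filter.1 hnuT).2
  have hnuOrb' : Orb nu' := (Finset.mem_filter.1 hnuT').2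
  have hdom : ∀ i : I, 0 ≤ D.coroot i nu := by
    intro i
    have h1 := hnumax _ (hmemT _ (hOrbRefl i nu hnuOrb))
    rw [D.hfun_refl] at h1
    omega
  have hanti : ∀ i : I, D.coroot i nu' ≤ 0 := by
    intro i
    have h1 := hnumin _ (hmemT _ (hOrbRefl i nu' hnuOrb'))
    rw [D.hfun_refl] at h1
    omega
  obtain ⟨w, hw, hwmu⟩ := hnuOrb
  obtain ⟨w', hw', hwmu'⟩ := hnuOrb'
  have hc1 : D.cpair nu = D.cpair mu := by rw [← hwmu, D.cpair_weyl hw]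
  have hc2 : D.cpair nu' = D.cpair mu := by rw [← hwmu', D.cpair_weyl hw']
  have hge : 0 ≤ D.cpair nu :=
    Finset.sum_nonneg fun i _ =>
      mul_nonneg (le_of_lt (D.avee_pos i)) (hdom i)
  have hle : D.cpair nu' ≤ 0 :=
    Finset.sum_nonpos fun i _ =>
      mul_nonpos_of_nonneg_of_nonpos (le_of_lt (D.avee_pos i)) (hanti i)
  have hzero : D.cpair nu = 0 := by omega
  have hterm : ∀ i ∈ Finset.univ, D.avee i * D.coroot i nu = 0 :=
    (Finset.sum_eq_zero_iff_of_nonneg fun i _ =>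
      mul_nonneg (le_of_lt (D.avee_pos i)) (hdom i)).1 hzero
  have hcz : ∀ i : I, D.coroot i nu = 0 := by
    intro i
    have := hterm i (Finset.mem_univ i)
    have hpos := D.avee_pos i
    exact (mul_eq_zero.1 this).resolve_left (by omega)
  have hfix := D.weyl_fix_of_coroot_zero hcz
  have hmunu : mu = nu := by
    have h1 : w⁻¹ nu = nu := hfix _ (inv_mem hw)
    calc mu = w⁻¹ (w mu) := (w.symm_apply_apply mu).symm
      _ = nu := by rw [hwmu, h1]
  intro v hv
  rw [hmunu]
  exact hfix v hv

end AffineKM
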